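/- For every prime p ≡ 1 (mod 4) with p ≥ 13 there exists a circulant complex Hadamard matrix of order p that is not equivalent to the Fourier matrix F_p. -/

import Mathlib

open Matrix

/-- `H` is a complex Hadamard matrix: unimodular entries and `H Hᴴ = n • I`. -/
def IsCHadamard {n : Type*} [Fintype n] [DecidableEq n] (H : Matrix n n ℂ) : Prop :=
  (∀ i j, ‖H i j‖ = 1) ∧
    H * H.conjTranspose = (Fintype.card n : ℂ) • 1

/-- Equivalence of complex Hadamard matrices: `H = P₁ D₁ K D₂ P₂` with permutation
matrices `P₁, P₂` and unitary diagonal matrices `D₁, D₂`. -/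
def HadEquiv {n : Type*} [Fintype n] [DecidableEq n] (H K : Matrix n n ℂ) : Prop :=
  ∃ (σ τ : Equiv.Perm n) (d₁ d₂ : n → ℂ),
    (∀ i, ‖d₁ i‖ = 1) ∧ (∀ i, ‖d₂ i‖ = 1) ∧
    H = σ.permMatrix ℂ * Matrix.diagonal d₁ * K * Matrix.diagonal d₂ * τ.permMatrix ℂ

/-- A matrix is circulant if its `(j,k)` entry depends only on `k - j`. -/
def IsCirculant {p : ℕ} (H : Matrix (Fin p) (Fin p) ℂ) : Prop :=
  ∃ g : Fin p → ℂ, ∀ j k, H j k = g (k - j)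

/-- The Fourier matrix of order `p`. -/
noncomputable def FourierMatrix (p : ℕ) : Matrix (Fin p) (Fin p) ℂ :=
  Matrix.of fun j k =>
    Complex.exp (2 * Real.pi * Complex.I * ((j : ℕ) * (k : ℕ)) / p)

/-!
Björck's sequence on `𝔽_p` takes the value `1` at `0`, `a = x + i √(1 - x²)` at the nonzero
squares and `conj a` at the non-squares, where `x = 1 / (1 + √p)`. Writing it as
`x + i √(1 - x²) χ + (1 - x) δ₀`, with `χ` the quadratic character, its periodic autocorrelation
at a nonzero shift reduces to Jacobsthal's sum `∑ χ(t) χ(t + s) = -1` and vanishes because `x` is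
a root of `(p - 1) x² + 2 x - 1`; hence its circulant matrix is a complex Hadamard matrix.

Equivalence preserves Haagerup's set of products `h_ij h_kl conj(h_il) conj(h_kj)`. For `F_p` these
are `p`-th roots of unity, while for the Björck matrix `a²` is one of them. But `a` is not a root
of unity: otherwise `a + conj a = 2x` would be an algebraic integer, whereas `2x` is irrational with
minimal polynomial `X² + c X - c`, `c = 4 / (p - 1) ∉ ℤ`.
-/

open Complex ComplexConjugate

section Jacobsthal

variable {F : Type*} [Field F] [Fintype F] [DecidableEq F]

/-- Substituting `t = -s x` turns the sum into the Jacobi sum `J(χ, χ) = -χ(-1)`. -/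
theorem quadraticChar_sum_mul_add (hF : ringChar F ≠ 2) {s : F} (hs : s ≠ 0) :
    ∑ t : F, quadraticChar F t * quadraticChar F (t + s) = -1 := by
  set χ := quadraticChar F
  have hJ : ∑ x : F, χ x * χ (1 - x) = -χ (-1) := by
    have h := jacobiSum_nontrivial_inv (quadraticChar_ne_one hF)
    rwa [(quadraticChar_isQuadratic F).inv, jacobiSum] at h
  have hsq : χ (-s) * χ s = χ (-1) := by
    rw [← map_mul, neg_mul, ← sq, neg_eq_neg_one_mul, map_mul, quadraticChar_sq_one' hs, mul_one]
  calc ∑ t : F, χ t * χ (t + s)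
      = ∑ x : F, χ (-s * x) * χ (-s * x + s) :=
        (Fintype.sum_equiv (Equiv.mulLeft₀ (-s) (neg_ne_zero.mpr hs)) _ _ fun _ => rfl).symm
    _ = ∑ x : F, χ (-s) * χ s * (χ x * χ (1 - x)) := by
        refine Fintype.sum_congr _ _ fun x => ?_
        rw [show -s * x + s = s * (1 - x) by ring, map_mul, map_mul]
        ring
    _ = -1 := by
        rw [← Finset.mul_sum, hJ, hsq, mul_neg, ← sq, quadraticChar_sq_one (by simp)]

end Jacobsthal

section BjorckUnit

variable (q : ℕ)

noncomputable def bjorckParam : ℝ := 1 / (1 + √q)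

noncomputable def bjorckUnit : ℂ := ⟨bjorckParam q, √(1 - bjorckParam q ^ 2)⟩

@[simp]
theorem bjorckUnit_re : (bjorckUnit q).re = bjorckParam q := rfl

theorem bjorckParam_pos : 0 < bjorckParam q := by
  unfold bjorckParam; positivity

theorem bjorckParam_le_one : bjorckParam q ≤ 1 := by
  rw [bjorckParam, div_le_one (by positivity)]
  linarith [Real.sqrt_nonneg q]

theorem bjorckParam_quadratic : ((q : ℝ) - 1) * bjorckParam q ^ 2 + 2 * bjorckParam q - 1 = 0 := by
  have hq : √(q : ℝ) ^ 2 = q := Real.sq_sqrt q.cast_nonneg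
  have h : 1 + √(q : ℝ) ≠ 0 := by positivity
  rw [bjorckParam]
  field_simp
  linear_combination -hq

theorem im_bjorckUnit_sq : (bjorckUnit q).im ^ 2 = 1 - (bjorckUnit q).re ^ 2 := by
  have h0 := bjorckParam_pos q
  have h1 := bjorckParam_le_one q
  exact Real.sq_sqrt (by nlinarith)

theorem norm_bjorckUnit : ‖bjorckUnit q‖ = 1 := by
  rw [Complex.norm_def, Complex.normSq_apply, ← sq, ← sq, im_bjorckUnit_sq]
  simp

end BjorckUnit

section BjorckSeq

variable (F : Type*) [Field F] [Fintype F] [DecidableEq F]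

noncomputable def bjorckSeq (t : F) : ℂ :=
  if t = 0 then 1
  else if IsSquare t then bjorckUnit (Fintype.card F) else conj (bjorckUnit (Fintype.card F))

variable {F}

theorem bjorckSeq_zero : bjorckSeq F 0 = 1 := if_pos rfl

theorem bjorckSeq_of_isSquare {t : F} (ht : t ≠ 0) (hsq : IsSquare t) :
    bjorckSeq F t = bjorckUnit (Fintype.card F) := by
  simp [bjorckSeq, ht, hsq]

theorem bjorckSeq_eq (t : F) :
    bjorckSeq F t = (bjorckUnit (Fintype.card F)).re
        + (bjorckUnit (Fintype.card F)).im * (quadraticChar F t : ℂ) * I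
        + if t = 0 then 1 - (bjorckUnit (Fintype.card F)).re else 0 := by
  by_cases ht : t = 0
  · simp [bjorckSeq, ht]
  rcases quadraticChar_dichotomy ht with h | h
  · have hsq := (quadraticChar_one_iff_isSquare ht).mp h
    apply Complex.ext <;> simp [bjorckSeq, ht, h, hsq]
  · have hsq := (quadraticChar_neg_one_iff_not_isSquare).mp h
    apply Complex.ext <;> simp [bjorckSeq, ht, h, hsq]

theorem norm_bjorckSeq (t : F) : ‖bjorckSeq F t‖ = 1 := by
  unfold bjorckSeq
  split_ifs <;> simp [norm_bjorckUnit]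

theorem sum_bjorckSeq_mul_conj_add (hF : Fintype.card F % 4 = 1) {s : F} (hs : s ≠ 0) :
    ∑ t : F, bjorckSeq F t * conj (bjorckSeq F (t + s)) = 0 := by
  have hF2 : ringChar F ≠ 2 := by
    rw [Ne, FiniteField.even_card_iff_char_two]; omega
  have hsum : ∑ t, (quadraticChar F t : ℂ) = 0 := by
    exact_mod_cast quadraticChar_sum_zero hF2
  have hsum_shift : ∑ t, (quadraticChar F (t + s) : ℂ) = 0 :=
    (Fintype.sum_equiv (Equiv.addRight s) _ _ fun _ => rfl).trans hsum
  have hcorr : ∑ t, (quadraticChar F t : ℂ) * quadraticChar F (t + s) = -1 := by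
    exact_mod_cast quadraticChar_sum_mul_add hF2 hs
  have hneg : quadraticChar F (-s) = quadraticChar F s := by
    have h1 : quadraticChar F (-1) = 1 :=
      (quadraticChar_one_iff_isSquare (by simp)).mpr
        (FiniteField.isSquare_neg_one_iff.mpr (by omega))
    rw [neg_eq_neg_one_mul s, map_mul, h1, one_mul]
  set x := (bjorckUnit (Fintype.card F)).re with hx_def
  set y := (bjorckUnit (Fintype.card F)).im with hy_def
  have hy : (y : ℂ) ^ 2 = 1 - (x : ℂ) ^ 2 := by exact_mod_cast im_bjorckUnit_sq _
  have hx : ((Fintype.card F : ℂ) - 1) * (x : ℂ) ^ 2 + 2 * x - 1 = 0 := by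
    exact_mod_cast bjorckParam_quadratic (Fintype.card F)
  -- Split off `1 - x` at `0` from the sequence `x + i y χ`, whose autocorrelation is Jacobsthal's.
  have hterm : ∀ t, bjorckSeq F t * conj (bjorckSeq F (t + s)) =
      (x ^ 2 + x * y * I * quadraticChar F t - x * y * I * quadraticChar F (t + s)
        + y ^ 2 * (quadraticChar F t * quadraticChar F (t + s)))
      + (if t = 0 then (1 - x) * (x - y * quadraticChar F s * I) else 0)
      + (if t = -s then (1 - x) * (x + y * quadraticChar F s * I) else 0) := by
    intro t
    rw [bjorckSeq_eq, bjorckSeq_eq, ← hx_def, ← hy_def]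
    simp only [map_add, map_mul, conj_ofReal, conj_I, map_intCast, add_eq_zero_iff_eq_neg]
    by_cases h0 : t = 0
    · have h1 : t ≠ -s := by simpa [h0, eq_comm] using hs
      subst h0
      simp only [zero_add, if_pos, if_neg h1, quadraticChar_zero]
      push_cast
      ring
    by_cases h1 : t = -s
    · subst h1
      simp only [if_pos, if_neg h0, hneg, neg_add_cancel, quadraticChar_zero]
      push_cast
      ring
    · simp only [if_neg h0, if_neg h1, ofReal_zero, add_zero]
      linear_combination -(y : ℂ) ^ 2 * quadraticChar F t * quadraticChar F (t + s) * I_sq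
  rw [Fintype.sum_congr _ _ hterm]
  simp only [Finset.sum_add_distrib, Finset.sum_sub_distrib, Finset.sum_ite_eq', Finset.mem_univ,
    if_true, ← Finset.mul_sum, hsum, hsum_shift, hcorr, Finset.sum_const, Finset.card_univ,
    nsmul_eq_mul]
  linear_combination hx - hy

end BjorckSeq

section Circulant

variable {G : Type*} [AddCommGroup G] [Fintype G] [DecidableEq G]

theorem isCHadamard_of_sum_mul_conj_add_eq_zero (v : G → ℂ) (hv : ∀ t, ‖v t‖ = 1)
    (hcorr : ∀ s ≠ 0, ∑ t, v t * conj (v (t + s)) = 0) :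
    IsCHadamard (Matrix.of fun j k => v (k - j)) := by
  refine ⟨fun _ _ => hv _, ?_⟩
  ext j k
  have hshift : (Matrix.of fun j k => v (k - j)) * (Matrix.of fun j k => v (k - j))ᴴ
      = Matrix.of fun j k => ∑ t, v t * conj (v (t + (j - k))) := by
    ext j k
    simp only [Matrix.mul_apply, Matrix.conjTranspose_apply, Matrix.of_apply, RCLike.star_def]
    exact Fintype.sum_equiv (Equiv.subRight j) _ _ fun t => by simp
  rw [hshift, Matrix.of_apply, Matrix.smul_apply, Matrix.one_apply]
  split_ifs with hjk
  · subst hjk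
    simp [Complex.mul_conj, Complex.normSq_eq_norm_sq, hv]
  · simpa using hcorr (j - k) (sub_ne_zero.mpr hjk)

end Circulant

section BjorckMatrix

variable (p : ℕ) [Fact p.Prime]

noncomputable def bjorckMatrix : Matrix (Fin p) (Fin p) ℂ :=
  Matrix.of fun j k => bjorckSeq (ZMod p) (ZMod.finEquiv p (k - j))

theorem isCirculant_bjorckMatrix : IsCirculant (bjorckMatrix p) :=
  ⟨fun d => bjorckSeq (ZMod p) (ZMod.finEquiv p d), fun _ _ => rfl⟩

variable {p}

theorem isCHadamard_bjorckMatrix (hp : p % 4 = 1) : IsCHadamard (bjorckMatrix p) := by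
  refine isCHadamard_of_sum_mul_conj_add_eq_zero _ (fun _ => norm_bjorckSeq _) fun s hs => ?_
  have hs' : ZMod.finEquiv p s ≠ 0 := (map_ne_zero_iff _ (ZMod.finEquiv p).injective).mpr hs
  simp only [map_add]
  exact ((ZMod.finEquiv p).toEquiv.sum_comp
    fun u => bjorckSeq (ZMod p) u * conj (bjorckSeq (ZMod p) (u + ZMod.finEquiv p s))).trans
    (sum_bjorckSeq_mul_conj_add (by rwa [ZMod.card]) hs')

end BjorckMatrix

section Haagerup

variable {n : Type*}

def haagerupSet (H : Matrix n n ℂ) : Set ℂ :=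
  {z | ∃ i j k l, H i j * H k l * conj (H i l) * conj (H k j) = z}

theorem pow_eq_one_of_mem_haagerupSet {H : Matrix n n ℂ} {m : ℕ} (hH : ∀ i j, H i j ^ m = 1)
    {z : ℂ} (hz : z ∈ haagerupSet H) : z ^ m = 1 := by
  obtain ⟨i, j, k, l, rfl⟩ := hz
  simp only [mul_pow, ← map_pow, hH, map_one, mul_one]

variable [Fintype n] [DecidableEq n]

theorem permMatrix_mul_diagonal_mul_mul_diagonal_mul_permMatrix_apply (σ τ : Equiv.Perm n)
    (d₁ d₂ : n → ℂ) (K : Matrix n n ℂ) (i j : n) :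
    (σ.permMatrix ℂ * Matrix.diagonal d₁ * K * Matrix.diagonal d₂ * τ.permMatrix ℂ) i j
      = d₁ (σ i) * K (σ i) (τ.symm j) * d₂ (τ.symm j) := by
  rw [Equiv.Perm.permMatrix, Equiv.Perm.permMatrix, Matrix.mul_assoc, Matrix.mul_assoc,
    Matrix.mul_assoc, ← Matrix.mul_assoc K, ← Matrix.mul_assoc (Matrix.diagonal d₁),
    PEquiv.toMatrix_toPEquiv_mul, PEquiv.mul_toMatrix_toPEquiv]
  simp [Matrix.mul_diagonal, Matrix.diagonal_mul, mul_assoc]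

theorem HadEquiv.haagerupSet_subset {H K : Matrix n n ℂ} (h : HadEquiv H K) :
    haagerupSet H ⊆ haagerupSet K := by
  obtain ⟨σ, τ, d₁, d₂, hd₁, hd₂, rfl⟩ := h
  rintro _ ⟨i, j, k, l, rfl⟩
  refine ⟨σ i, τ.symm j, σ k, τ.symm l, ?_⟩
  have hconj : ∀ d : ℂ, ‖d‖ = 1 → conj d = d⁻¹ := fun d hd => by
    rw [Complex.inv_def, Complex.normSq_eq_norm_sq, hd]; simp
  have hne : ∀ d : ℂ, ‖d‖ = 1 → d ≠ 0 := fun d hd h0 => by simp [h0] at hd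
  simp only [permMatrix_mul_diagonal_mul_mul_diagonal_mul_permMatrix_apply, map_mul,
    hconj _ (hd₁ _), hconj _ (hd₂ _)]
  have := hne _ (hd₁ (σ i)); have := hne _ (hd₁ (σ k))
  have := hne _ (hd₂ (τ.symm j)); have := hne _ (hd₂ (τ.symm l))
  field_simp

end Haagerup

theorem fourierMatrix_apply_pow (p : ℕ) [NeZero p] (j k : Fin p) : FourierMatrix p j k ^ p = 1 := by
  rw [FourierMatrix, Matrix.of_apply, ← Complex.exp_nat_mul, mul_div_cancel₀ _ (NeZero.ne _)]
  rw [show 2 * (Real.pi : ℂ) * I * ((j : ℕ) * (k : ℕ)) = ((j * k : ℕ) : ℂ) * (2 * Real.pi * I) by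
    push_cast; ring]
  exact Complex.exp_nat_mul_two_pi_mul_I _

theorem sq_bjorckUnit_mem_haagerupSet {p : ℕ} [Fact p.Prime] (hp : p % 4 = 1) :
    bjorckUnit p ^ 2 ∈ haagerupSet (bjorckMatrix p) := by
  have hsq : IsSquare (-1 : ZMod p) := FiniteField.isSquare_neg_one_iff.mpr (by rw [ZMod.card]; omega)
  refine ⟨0, 1, 1, 0, ?_⟩
  simp [bjorckMatrix, bjorckSeq_zero, bjorckSeq_of_isSquare, hsq, ZMod.card, sq]

open Polynomial in
/-- The quadratic is the minimal polynomial of `t` over `ℚ`, which by Gauss's lemma has integer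
coefficients. -/
theorem Irrational.exists_intCast_eq_of_isIntegral {t : ℝ} (ht : Irrational t)
    (hint : IsIntegral ℤ t) {b c : ℚ} (h : t ^ 2 + b * t + c = 0) : ∃ m : ℤ, (m : ℚ) = b := by
  set P : ℚ[X] := X ^ 2 + C b * X + C c
  have hP_monic : P.Monic := by unfold P; monicity!
  have hP_deg : P.natDegree = 2 := by unfold P; compute_degree!
  have hroot : aeval t P = 0 := by simp [P, h]
  have hIQ : IsIntegral ℚ t := ⟨P, hP_monic, hroot⟩
  have hrange : t ∉ (algebraMap ℚ ℝ).range := fun ⟨q, hq⟩ => ht ⟨q, hq⟩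
  have hmin : minpoly ℚ t = P := by
    refine Polynomial.eq_of_dvd_of_natDegree_le_of_leadingCoeff (minpoly.dvd ℚ t hroot) ?_ ?_
    · rw [hP_deg]; exact (minpoly.two_le_natDegree_iff hIQ).mpr hrange
    · rw [(minpoly.monic hIQ).leadingCoeff, hP_monic.leadingCoeff]
  refine ⟨(minpoly ℤ t).coeff 1, ?_⟩
  have h1 := congrArg (coeff · 1) (minpoly.isIntegrallyClosed_eq_field_fractions' ℚ hint)
  simp only [hmin, coeff_map, eq_intCast] at h1
  simp [← h1, P]

theorem isIntegral_two_mul_re_of_pow_eq_one {z : ℂ} {n : ℕ} (hn : n ≠ 0) (h : z ^ n = 1) :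
    IsIntegral ℤ (2 * z.re) := by
  have hroot : ∀ w : ℂ, w ^ n = 1 → IsIntegral ℤ w := fun w hw =>
    ⟨Polynomial.X ^ n - 1, Polynomial.monic_X_pow_sub_C 1 hn, by simp [hw]⟩
  have hsum : IsIntegral ℤ (z + conj z) :=
    (hroot z h).add (hroot _ (by rw [← map_pow, h, map_one]))
  rw [Complex.add_conj] at hsum
  exact (isIntegral_algebraMap_iff (B := ℂ) Complex.ofReal_injective).mp (by simpa using hsum)

theorem bjorckUnit_pow_ne_one {q : ℕ} (hq : ¬IsSquare q) (hq5 : 5 < q) {n : ℕ} (hn : n ≠ 0) :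
    bjorckUnit q ^ n ≠ 1 := by
  intro h
  have hint := isIntegral_two_mul_re_of_pow_eq_one hn h
  have hirr : Irrational (2 * (bjorckUnit q).re) := by
    have := ((irrational_sqrt_natCast_iff.mpr hq).ratCast_add 1).ratCast_div (q := 2) two_ne_zero
    convert this using 1
    simp [bjorckUnit, bjorckParam, div_eq_mul_inv]
  have hquad : (2 * (bjorckUnit q).re) ^ 2 + ((4 / (q - 1) : ℚ) : ℝ) * (2 * (bjorckUnit q).re)
      + ((-(4 / (q - 1)) : ℚ) : ℝ) = 0 := by
    have hq1 : (q : ℝ) - 1 ≠ 0 := by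
      have : (5 : ℝ) < q := by exact_mod_cast hq5
      linarith
    rw [bjorckUnit_re]
    push_cast
    field_simp
    linear_combination 4 * bjorckParam_quadratic q
  obtain ⟨m, hm⟩ := hirr.exists_intCast_eq_of_isIntegral hint hquad
  have h6 : (6 : ℚ) ≤ q := by exact_mod_cast hq5
  have hm0 : (0 : ℚ) < m := by rw [hm]; apply div_pos <;> linarith
  have hm1 : (m : ℚ) < 1 := by rw [hm, div_lt_one (by linarith)]; linarith
  norm_cast at hm0 hm1
  omega

theorem stmt9 (p : ℕ) (hp : p.Prime) (hmod : p % 4 = 1) (hp13 : 13 ≤ p) :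
    ∃ H : Matrix (Fin p) (Fin p) ℂ,
      IsCHadamard H ∧ IsCirculant H ∧ ¬ HadEquiv H (FourierMatrix p) := by
  have : Fact p.Prime := ⟨hp⟩
  refine ⟨bjorckMatrix p, isCHadamard_bjorckMatrix hmod, isCirculant_bjorckMatrix p, fun hequiv => ?_⟩
  have hpow : (bjorckUnit p ^ 2) ^ p = 1 :=
    pow_eq_one_of_mem_haagerupSet (fourierMatrix_apply_pow p)
      (hequiv.haagerupSet_subset (sq_bjorckUnit_mem_haagerupSet hmod))
  rw [← pow_mul] at hpow
  exact bjorckUnit_pow_ne_one hp.not_isSquare (by omega) (by omega) hpow
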